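/- If a finite group G is not DRR-detecting, then there is a Cayley digraph on G witnessing that G is not DRR-detecting which is weakly connected and prime with respect to cartesian product. Similarly, if G is not GRR-detecting, then there is a Cayley graph on G witnessing that G is not GRR-detecting which is connected and prime with respect to cartesian product. -/

import Mathlib

/-! Common definitions: Cayley digraphs, digraph automorphism groups,
DRRs/GRRs, detecting groups, the regular representation, the group `W(G,N)`,
wreath and cartesian products of digraphs, and the wreath product of groups. -/

universe u

/-- The adjacency relation of the Cayley digraph `Cay(G,S)`:
there is a directed edge from `g₁` to `g₂` iff `g₂ = s * g₁` for some `s ∈ S`. -/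
def cayAdj {G : Type*} [Group G] (S : Set G) : G → G → Prop :=
  fun g₁ g₂ => ∃ s ∈ S, g₂ = s * g₁

/-- The automorphism group of a digraph (given by its adjacency relation),
as a subgroup of the symmetric group on the vertices. -/
def digraphAut {V : Type*} (Adj : V → V → Prop) : Subgroup (Equiv.Perm V) where
  carrier := {σ | ∀ x y, Adj (σ x) (σ y) ↔ Adj x y}
  one_mem' := fun _ _ => Iff.rfl
  mul_mem' := by
    intro σ τ hσ hτ x y
    simp only [Equiv.Perm.mul_apply]
    exact (hσ _ _).trans (hτ _ _)
  inv_mem' := by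
    intro σ hσ x y
    have h := (hσ (σ⁻¹ x) (σ⁻¹ y)).symm
    simpa using h

/-- A digraph is a DRR (digraphical regular representation) of the group `G` if its
automorphism group is isomorphic to `G` and acts regularly on the vertex set. -/
def IsDRR (G : Type*) [Group G] {V : Type*} (Adj : V → V → Prop) : Prop :=
  Nonempty (digraphAut Adj ≃* G) ∧
    ∀ v w : V, ∃! σ : digraphAut Adj, (σ : Equiv.Perm V) v = w

/-- A GRR (graphical regular representation) of `G` is a DRR that is a graph. -/
def IsGRR (G : Type*) [Group G] {V : Type*} (Adj : V → V → Prop) : Prop :=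
  Symmetric Adj ∧ IsDRR G Adj

/-- `Aut(G,S)` is trivial: the only group automorphism `φ` of `G` with `φ(S) = S`
is the identity. -/
def AutGSTrivial {G : Type*} [Group G] (S : Set G) : Prop :=
  ∀ φ : MulAut G, ⇑φ '' S = S → φ = 1

/-- `G` is DRR-detecting: for every `S ⊆ G`, if `Aut(G,S) = 1` then
`Cay(G,S)` is a DRR of `G`. -/
def DRRDetecting (G : Type*) [Group G] : Prop :=
  ∀ S : Set G, AutGSTrivial S → IsDRR G (cayAdj S)

/-- `G` is GRR-detecting: for every inverse-closed `S ⊆ G`, if `Aut(G,S) = 1` then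
`Cay(G,S)` is a GRR of `G`. -/
def GRRDetecting (G : Type*) [Group G] : Prop :=
  ∀ S : Set G, (∀ s ∈ S, s⁻¹ ∈ S) → AutGSTrivial S → IsGRR G (cayAdj S)

/-- `G` admits a DRR (equivalently, some Cayley digraph of `G` is a DRR). -/
def HasDRR (G : Type*) [Group G] : Prop :=
  ∃ S : Set G, IsDRR G (cayAdj S)

/-- `G` admits a GRR (equivalently, some Cayley graph of `G` is a GRR). -/
def HasGRR (G : Type*) [Group G] : Prop :=
  ∃ S : Set G, (∀ s ∈ S, s⁻¹ ∈ S) ∧ IsGRR G (cayAdj S)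

/-- The right regular representation `Ĝ = {x ↦ x·g : g ∈ G}` of `G`,
as a subgroup of the symmetric group on `G`. -/
def regularRep (G : Type*) [Group G] : Subgroup (Equiv.Perm G) where
  carrier := {σ | ∃ g : G, ∀ x, σ x = x * g}
  one_mem' := ⟨1, fun x => (mul_one x).symm⟩
  mul_mem' := by
    rintro σ τ ⟨g, hg⟩ ⟨h, hh⟩
    exact ⟨h * g, fun x => by
      simp only [Equiv.Perm.mul_apply, hg, hh, mul_assoc]⟩
  inv_mem' := by
    rintro σ ⟨g, hg⟩
    refine ⟨g⁻¹, fun x => ?_⟩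
    have h1 : σ (x * g⁻¹) = x := by rw [hg]; group
    calc σ⁻¹ x = σ⁻¹ (σ (x * g⁻¹)) := by rw [h1]
      _ = x * g⁻¹ := by simp

/-- The set `W(G,N)` of all permutations `φ_{c,f} : x ↦ x·c·f(x̄)` of `G`,
where `c ∈ G` and `f : G/N → N`. -/
def Wset (G : Type*) [Group G] (N : Subgroup G) [N.Normal] : Set (Equiv.Perm G) :=
  {σ | ∃ (c : G) (f : G ⧸ N → G), (∀ q, f q ∈ N) ∧
      ∀ x : G, σ x = x * c * f (QuotientGroup.mk x)}

/-- The wreath product `X ≀ Y` of two digraphs. -/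
def wreathAdj {X Y : Type*} (A : X → X → Prop) (B : Y → Y → Prop) :
    X × Y → X × Y → Prop :=
  fun p q => A p.1 q.1 ∨ (p.1 = q.1 ∧ B p.2 q.2)

/-- The cartesian product `X □ Y` of two digraphs. -/
def cartAdj {X Y : Type*} (A : X → X → Prop) (B : Y → Y → Prop) :
    X × Y → X × Y → Prop :=
  fun p q => (p.1 = q.1 ∧ B p.2 q.2) ∨ (p.2 = q.2 ∧ A p.1 q.1)

/-- A digraph is prime with respect to the cartesian product if it has more than one
vertex and is not isomorphic to a cartesian product of two digraphs,
each with more than one vertex. -/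
def IsPrimeDigraph {V : Type u} (Adj : V → V → Prop) : Prop :=
  (∃ x y : V, x ≠ y) ∧
    ¬ ∃ (X Y : Type u) (A : X → X → Prop) (B : Y → Y → Prop) (e : V ≃ X × Y),
        (∃ x₁ x₂ : X, x₁ ≠ x₂) ∧ (∃ y₁ y₂ : Y, y₁ ≠ y₂) ∧
          ∀ v w : V, Adj v w ↔ cartAdj A B (e v) (e w)

/-- A digraph is weakly connected if any two vertices are joined by a path in the
underlying undirected graph. -/
def WeaklyConnected {V : Type*} (Adj : V → V → Prop) : Prop :=
  ∀ x y : V, Relation.ReflTransGen (fun a b => Adj a b ∨ Adj b a) x y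

/-- Translation of coordinates: the automorphism `v ↦ (x ↦ v (x * q))`
of the group `Q → N`. -/
def transAut {Q N : Type*} [Group Q] [Group N] (q : Q) : (Q → N) ≃* (Q → N) where
  toFun v := fun x => v (x * q)
  invFun v := fun x => v (x * q⁻¹)
  left_inv v := funext fun x => by simp [mul_assoc]
  right_inv v := funext fun x => by simp [mul_assoc]
  map_mul' v w := rfl

/-- The action of `Q` on `Q → N` by translating coordinates, as a homomorphism
`Q →* MulAut (Q → N)`. -/
def transHom (Q N : Type*) [Group Q] [Group N] : Q →* MulAut (Q → N) where
  toFun := transAut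
  map_one' := by
    ext v x
    simp [transAut]
  map_mul' q₁ q₂ := by
    ext v x
    simp [transAut, mul_assoc, MulAut.mul_apply]

/-- The wreath product `Q ≀ N` of two groups: the semidirect product
`N^Q ⋊ Q`, with `Q` acting on `N^Q` by translating the coordinates. -/
abbrev WreathProd (Q N : Type*) [Group Q] [Group N] :=
  SemidirectProduct (Q → N) Q (transHom Q N)

/-! `Cay(G,Sᶜ)` is the complement of `Cay(G,S)`: both have the same automorphism group and
`Aut(G,Sᶜ) = Aut(G,S)`, so it suffices to show that one of them is weakly connected and prime.
The complement of a disconnected digraph is connected. A cartesian factorisation `X □ Y` puts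
every edge on a row or a column of the grid `X × Y`, so two vertices lying on no common line of
the grid of one digraph are joined in the other one. Counting such vertices leaves only a few
small grids: `2 × 2` with the other digraph disconnected, `2 × m` against `2 × m` with `m ≤ 4`,
`3 × 3` against `3 × 3`, and `2 × 6` against `3 × 4`, which is impossible. In the remaining
cases `S` or `Sᶜ` is, up to `1`, an involution in a group of order `4`, an index-two subgroup of
order `3` or `4` together with an involution, or an inverse-closed subset of a group of order
`9`; a transvection, the inversion or a conjugation then gives a nontrivial element of
`Aut(G,S)`. -/

section Digraphs

variable {V : Type*} {Adj Adj' : V → V → Prop}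

theorem digraphAut_eq_of_iff_not (hc : ∀ u v, Adj' u v ↔ ¬ Adj u v) :
    digraphAut Adj' = digraphAut Adj := by
  ext σ
  exact forall_congr' fun u => forall_congr' fun v => by rw [hc, hc, not_iff_not]

theorem exists_closed_of_not_weaklyConnected (h : ¬ WeaklyConnected Adj) (v : V) :
    ∃ P : Set V, v ∈ P ∧ Pᶜ.Nonempty ∧ ∀ u w, Adj u w → (u ∈ P ↔ w ∈ P) := by
  set R := fun a b => Adj a b ∨ Adj b a
  have : Std.Symm R := ⟨fun _ _ h => h.symm⟩
  obtain ⟨x, y, hxy⟩ : ∃ x y, ¬ Relation.ReflTransGen R x y := by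
    simpa [WeaklyConnected] using h
  refine ⟨{w | Relation.ReflTransGen R v w}, .refl, ?_, fun u w huw =>
    ⟨fun hu => hu.tail (Or.inl huw), fun hw => hw.tail (Or.inr huw)⟩⟩
  by_contra! hP
  have hall : ∀ w, Relation.ReflTransGen R v w := fun w => by
    by_contra hw; exact hP.subset hw
  exact hxy ((Std.Symm.symm _ _ (hall x)).trans (hall y))

theorem weaklyConnected_of_not_weaklyConnected (hc : ∀ u v, Adj' u v ↔ ¬ Adj u v)
    (h : ¬ WeaklyConnected Adj) : WeaklyConnected Adj' := by
  intro x y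
  obtain ⟨P, hxP, ⟨q, hq⟩, hP⟩ := exists_closed_of_not_weaklyConnected h x
  have hcross : ∀ a ∈ P, ∀ b ∉ P, Relation.ReflTransGen (fun a b => Adj' a b ∨ Adj' b a) a b ∧
      Relation.ReflTransGen (fun a b => Adj' a b ∨ Adj' b a) b a := fun a ha b hb =>
    have hab : Adj' a b := (hc a b).mpr fun h => hb ((hP a b h).mp ha)
    ⟨.single (Or.inl hab), .single (Or.inr hab)⟩
  by_cases hy : y ∈ P
  · exact (hcross x hxP q hq).1.trans (hcross y hy q hq).2
  · exact (hcross x hxP y hy).1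

end Digraphs

section Cayley

variable {G : Type*} [Group G]

theorem cayAdj_iff {S : Set G} {u v : G} : cayAdj S u v ↔ v * u⁻¹ ∈ S :=
  ⟨by rintro ⟨s, hs, rfl⟩; simpa using hs, fun h => ⟨v * u⁻¹, h, by group⟩⟩

theorem cayAdj_compl (S : Set G) (u v : G) : cayAdj Sᶜ u v ↔ ¬ cayAdj S u v := by
  rw [cayAdj_iff, cayAdj_iff]; rfl

theorem cayAdj_one_left {S : Set G} {v : G} : cayAdj S 1 v ↔ v ∈ S := by
  simp [cayAdj_iff]

theorem cayAdj_one_right {S : Set G} {v : G} : cayAdj S v 1 ↔ v⁻¹ ∈ S := by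
  simp [cayAdj_iff]

theorem cayAdj_mul_right {S : Set G} (u v a : G) :
    cayAdj S (u * a) (v * a) ↔ cayAdj S u v := by
  simp only [cayAdj_iff, mul_inv_rev, mul_assoc, mul_inv_cancel_left]

theorem symmetric_cayAdj {S : Set G} (hS : ∀ s ∈ S, s⁻¹ ∈ S) : Symmetric (cayAdj S) := by
  intro u v h
  rw [cayAdj_iff] at h ⊢
  simpa using hS _ h

theorem ncard_setOf_cayAdj [Finite G] (S : Set G) (u : G) :
    {v | v ≠ u ∧ cayAdj S u v}.ncard = (S \ {1}).ncard := by
  have : {v | v ≠ u ∧ cayAdj S u v} = (· * u) '' (S \ {1}) := by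
    ext v
    simp only [Set.mem_ofPred_eq, Set.mem_image, Set.mem_sdiff, Set.mem_singleton_iff, cayAdj_iff]
    constructor
    · rintro ⟨hvu, hv⟩
      exact ⟨v * u⁻¹, ⟨hv, by rwa [mul_inv_eq_one]⟩, by group⟩
    · rintro ⟨s, ⟨hs, hs1⟩, rfl⟩
      simpa [hs] using hs1
  rw [this, Set.ncard_image_of_injective _ (mul_left_injective u)]

theorem isDRR_cayAdj_compl {S : Set G} : IsDRR G (cayAdj Sᶜ) ↔ IsDRR G (cayAdj S) := by
  rw [IsDRR, IsDRR, digraphAut_eq_of_iff_not (cayAdj_compl S)]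

theorem isDRR_of_subsingleton [Subsingleton G] (S : Set G) : IsDRR G (cayAdj S) :=
  ⟨⟨⟨⟨fun _ => 1, fun _ => 1, fun _ => Subsingleton.elim _ _, fun _ => Subsingleton.elim _ _⟩,
    fun _ _ => Subsingleton.elim _ _⟩⟩,
    fun _ _ => ⟨1, Subsingleton.elim _ _, fun _ _ => Subsingleton.elim _ _⟩⟩

theorem nontrivial_of_not_isDRR {S : Set G} (h : ¬ IsDRR G (cayAdj S)) : Nontrivial G := by
  by_contra hG
  have := not_nontrivial_iff_subsingleton.mp hG
  exact h (isDRR_of_subsingleton S)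

theorem AutGSTrivial.compl {S : Set G} (h : AutGSTrivial S) : AutGSTrivial Sᶜ := by
  intro φ hφ
  apply h
  rwa [Set.image_compl_eq φ.bijective, compl_inj_iff] at hφ

theorem AutGSTrivial.eq_one_of_mapsTo [Finite G] {S : Set G} (h : AutGSTrivial S)
    {φ : MulAut G} (hφ : Set.MapsTo φ S S) : φ = 1 :=
  h φ (((Set.toFinite S).injOn_iff_bijOn_of_mapsTo hφ).mp φ.injective.injOn).image_eq

end Cayley

section Automorphisms

variable {G : Type*} [Group G]

theorem mul_comm_of_mul_self_eq_one (hG : ∀ g : G, g * g = 1) (a b : G) : a * b = b * a := by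
  have hinv : ∀ g : G, g⁻¹ = g := fun g => inv_eq_of_mul_eq_one_right (hG g)
  rw [← hinv (a * b), mul_inv_rev, hinv, hinv]

theorem exists_mulAut_ne_one_apply_eq_inv (hG : ∀ a b : G, a * b = b * a) {g : G} (hg : g * g ≠ 1) :
    ∃ φ : MulAut G, φ ≠ 1 ∧ ∀ x, φ x = x⁻¹ := by
  refine ⟨⟨Equiv.inv G, fun a b => by simp [mul_inv_rev, hG]⟩, fun h => hg ?_, fun _ => rfl⟩
  have : g⁻¹ = g := DFunLike.congr_fun h g
  nth_rw 1 [← this]; exact inv_mul_cancel g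

theorem exists_noncentral_commute (hG : ¬ ∀ a b : G, a * b = b * a) (t : G) :
    ∃ g, g * t = t * g ∧ ∃ x, g * x ≠ x * g := by
  by_cases ht : ∀ x, t * x = x * t
  · push Not at hG
    obtain ⟨a, b, hab⟩ := hG
    exact ⟨a, (ht a).symm, b, hab⟩
  · push Not at ht
    exact ⟨t, rfl, ht⟩

theorem mulAut_conj_ne_one {g : G} (hg : ∃ x, g * x ≠ x * g) :
    MulAut.conj g ≠ 1 := by
  obtain ⟨x, hx⟩ := hg
  intro h
  apply hx
  have : g * x * g⁻¹ = x := by simpa using DFunLike.congr_fun h x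
  nth_rw 2 [← this]
  exact (inv_mul_cancel_right _ _).symm

theorem exists_mulAut_transvection (hG : ∀ g : G, g * g = 1) {K : Subgroup G}
    (hK : K.index = 2) {u : G} (hu : u ∈ K) (hu1 : u ≠ 1) :
    ∃ φ : MulAut G, φ ≠ 1 ∧ (∀ x ∈ K, φ x = x) ∧ ∀ x ∉ K, φ x = x * u := by
  classical
  have hcomm := mul_comm_of_mul_self_eq_one hG
  have hxu : ∀ x, x * u ∈ K ↔ x ∈ K := fun x => by
    rw [Subgroup.mul_mem_iff_of_index_two hK]; simp [hu]
  set f : G → G := fun x => if x ∈ K then x else x * u with hf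
  have hff : ∀ x, f (f x) = x := fun x => by
    by_cases hx : x ∈ K
    · simp [hf, hx]
    · simp [hf, hx, hxu, mul_assoc, hG]
  have hmul : ∀ a b, f (a * b) = f a * f b := fun a b => by
    by_cases ha : a ∈ K <;> by_cases hb : b ∈ K <;>
      simp [hf, ha, hb, Subgroup.mul_mem_iff_of_index_two hK]
    · rw [mul_assoc]
    · rw [mul_assoc, hcomm b u, ← mul_assoc]
    · rw [mul_assoc, ← mul_assoc u, hcomm u b, mul_assoc, hG, mul_one]
  obtain ⟨x, hx⟩ : ∃ x, x ∉ K := by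
    by_contra! h
    have : K = ⊤ := eq_top_iff.mpr fun x _ => h x
    simp [this] at hK
  refine ⟨⟨⟨f, f, hff, hff⟩, hmul⟩, fun h => hu1 ?_, fun x hx => if_pos hx,
    fun x hx => if_neg hx⟩
  have : x * u = x := by simpa [hf, hx] using DFunLike.congr_fun h x
  simpa using this

theorem exists_mulAut_ne_one_fixing_of_card_eq_four (hG : Nat.card G = 4) {t : G}
    (ht1 : t ≠ 1) (ht : t * t = 1) : ∃ φ : MulAut G, φ ≠ 1 ∧ φ t = t := by
  have hcomm : ∀ a b : G, a * b = b * a :=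
    (IsPGroup.isMulCommutative_of_card_eq_prime_sq (p := 2) (by rw [hG]; norm_num)).is_comm.comm
  by_cases hexp : ∀ g : G, g * g = 1
  · have hK : (Subgroup.zpowers t).index = 2 := by
      have h := (Subgroup.zpowers t).index_mul_card
      rw [Nat.card_zpowers, orderOf_eq_prime (by rwa [sq]) ht1, hG] at h
      omega
    obtain ⟨φ, hφ, hfix, -⟩ := exists_mulAut_transvection hexp hK (Subgroup.mem_zpowers t) ht1
    exact ⟨φ, hφ, hfix t (Subgroup.mem_zpowers t)⟩
  · push Not at hexp
    obtain ⟨g, hg⟩ := hexp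
    obtain ⟨φ, hφ, hinv⟩ := exists_mulAut_ne_one_apply_eq_inv hcomm hg
    exact ⟨φ, hφ, by rw [hinv, inv_eq_of_mul_eq_one_right ht]⟩

def kleinSubgroup (hG : ∀ g : G, g * g = 1) (a b : G) : Subgroup G where
  carrier := {1, a, b, a * b}
  mul_mem' := by
    have hc := mul_comm_of_mul_self_eq_one hG
    have hlc : ∀ x y z : G, x * (y * z) = y * (x * z) := fun x y z => by
      rw [← mul_assoc, hc x y, mul_assoc]
    rintro x y (rfl | rfl | rfl | rfl) (rfl | rfl | rfl | rfl) <;>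
      simp [hc, hlc, hG]
  one_mem' := by simp
  inv_mem' := by
    intro x hx
    rwa [inv_eq_of_mul_eq_one_right (hG x)]

theorem natCard_kleinSubgroup (hG : ∀ g : G, g * g = 1) {a b : G} (ha : a ≠ 1) (hb : b ≠ 1)
    (hab : a ≠ b) : Nat.card (kleinSubgroup hG a b) = 4 := by
  have hab1 : a * b ≠ 1 := fun h => hab (by
    rw [← inv_eq_of_mul_eq_one_right (hG a)]; exact (inv_eq_of_mul_eq_one_right h))
  rw [← SetLike.coe_sort_coe, Nat.card_coe_set_eq]
  change ({1, a, b, a * b} : Set G).ncard = 4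
  rw [Set.ncard_insert_of_notMem (by simp [ha.symm, hb.symm, hab1.symm]),
    Set.ncard_insert_of_notMem (by simp [hab, hb]), Set.ncard_pair (by simpa using ha)]

theorem exists_mulAut_ne_one_of_index_eq_two_of_mul_self_eq_one (hG : ∀ g : G, g * g = 1)
    {R : Subgroup G} (hR : R.index = 2) (hcard : Nat.card R = 3 ∨ Nat.card R = 4) {t : G}
    (htR : t ∉ R) : ∃ φ : MulAut G, φ ≠ 1 ∧ (∀ r ∈ R, φ r ∈ R) ∧ φ t = t := by
  have hR1 : 1 < Nat.card R := by omega
  have : Finite R := Nat.finite_of_card_ne_zero (by omega)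
  obtain ⟨u, huR, hu1⟩ := (R.bot_or_exists_ne_one).resolve_left
    ((Subgroup.one_lt_card_iff_ne_bot R).mp hR1)
  have hu2 : orderOf u = 2 := orderOf_eq_prime (by rw [sq, hG]) hu1
  have hR4 : Nat.card R = 4 := hcard.resolve_left fun h3 => by
    have := R.orderOf_dvd_natCard huR
    rw [hu2, h3] at this
    omega
  have ht1 : t ≠ 1 := fun h => htR (h ▸ R.one_mem)
  have hK : (kleinSubgroup hG u t).index = 2 := by
    have h := (kleinSubgroup hG u t).index_mul_card
    rw [natCard_kleinSubgroup hG hu1 ht1 (fun h => htR (h ▸ huR)), ← R.index_mul_card, hR, hR4] at h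
    omega
  obtain ⟨φ, hφ, hfix, hmove⟩ :=
    exists_mulAut_transvection hG hK (by simp [kleinSubgroup]) hu1
  refine ⟨φ, hφ, fun r hr => ?_, hfix t (by simp [kleinSubgroup])⟩
  by_cases hrK : r ∈ kleinSubgroup hG u t
  · rwa [hfix r hrK]
  · rw [hmove r hrK]; exact R.mul_mem hr huR

theorem exists_mulAut_ne_one_of_index_eq_two {R : Subgroup G} (hR : R.index = 2)
    (hcard : Nat.card R = 3 ∨ Nat.card R = 4) {t : G} (htR : t ∉ R) (ht : t * t = 1) :
    ∃ φ : MulAut G, φ ≠ 1 ∧ (∀ r ∈ R, φ r ∈ R) ∧ φ t = t := by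
  by_cases hcomm : ∀ a b : G, a * b = b * a
  · by_cases hexp : ∀ g : G, g * g = 1
    · exact exists_mulAut_ne_one_of_index_eq_two_of_mul_self_eq_one hexp hR hcard htR
    · push Not at hexp
      obtain ⟨g, hg⟩ := hexp
      obtain ⟨φ, hφ, hinv⟩ := exists_mulAut_ne_one_apply_eq_inv hcomm hg
      refine ⟨φ, hφ, fun r hr => ?_, ?_⟩
      · rw [hinv]; exact R.inv_mem hr
      · rw [hinv, inv_eq_of_mul_eq_one_right ht]
  · obtain ⟨g, hgt, hg⟩ := exists_noncentral_commute hcomm t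
    have hRn := Subgroup.normal_of_index_eq_two hR
    refine ⟨MulAut.conj g, mulAut_conj_ne_one hg, fun r hr => ?_, ?_⟩
    · simpa using hRn.conj_mem r hr g
    · simp [hgt]

theorem exists_mulAut_ne_one_inv_of_card_eq_nine (hG : Nat.card G = 9) :
    ∃ φ : MulAut G, φ ≠ 1 ∧ ∀ x, φ x = x⁻¹ := by
  have hcomm : ∀ a b : G, a * b = b * a :=
    (IsPGroup.isMulCommutative_of_card_eq_prime_sq (p := 3) (by rw [hG]; norm_num)).is_comm.comm
  have : Fact (Nat.Prime 3) := ⟨Nat.prime_three⟩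
  have : Finite G := Nat.finite_of_card_ne_zero (by rw [hG]; norm_num)
  obtain ⟨g, hg⟩ : ∃ g : G, orderOf g = 3 :=
    exists_prime_orderOf_dvd_card' 3 (by rw [hG]; norm_num)
  refine exists_mulAut_ne_one_apply_eq_inv hcomm (g := g) fun h => ?_
  have := orderOf_dvd_of_pow_eq_one (by rwa [sq] : g ^ 2 = 1)
  rw [hg] at this
  omega

end Automorphisms

theorem eq_of_ne_of_ne_of_natCard_eq_two {α : Type*} (h : Nat.card α = 2) {a b c : α}
    (ha : a ≠ c) (hb : b ≠ c) : a = b :=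
  ((Nat.card_eq_two_iff' c).mp h).unique ha hb

theorem eq_two_or_eq_two_of_mul_le {a b : ℕ} (ha : 2 ≤ a) (hb : 2 ≤ b)
    (h : a * b ≤ 2 * ((a - 1) + (b - 1))) : a = 2 ∨ b = 2 := by
  obtain ⟨a, rfl⟩ := Nat.exists_eq_add_of_le ha
  obtain ⟨b, rfl⟩ := Nat.exists_eq_add_of_le hb
  simp only [show ∀ n, 2 + n - 1 = n + 1 from fun n => by omega] at h
  rcases Nat.eq_zero_or_pos a with rfl | ha'
  · omega
  · rcases Nat.eq_zero_or_pos b with rfl | hb'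
    · omega
    · nlinarith

theorem grid_dims {a b c d : ℕ} (ha : 2 ≤ a) (hab : a ≤ b) (hc : 2 ≤ c) (hcd : c ≤ d)
    (hn : a * b = c * d) (h₁ : (a - 1) * (b - 1) ≤ (c - 1) + (d - 1))
    (h₂ : (c - 1) * (d - 1) ≤ (a - 1) + (b - 1)) :
    (a = 2 ∧ c = 2 ∧ b = d) ∨ (a = 3 ∧ b = 3 ∧ c = 3 ∧ d = 3) ∨
      (a = 2 ∧ b = 6 ∧ c = 3 ∧ d = 4) ∨ (a = 3 ∧ b = 4 ∧ c = 2 ∧ d = 6) := by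
  obtain ⟨a, rfl⟩ := Nat.exists_eq_add_of_le ha
  obtain ⟨b, rfl⟩ := Nat.exists_eq_add_of_le (ha.trans hab)
  obtain ⟨c, rfl⟩ := Nat.exists_eq_add_of_le hc
  obtain ⟨d, rfl⟩ := Nat.exists_eq_add_of_le (hc.trans hcd)
  simp only [show ∀ n, 2 + n - 1 = n + 1 from fun n => by omega] at h₁ h₂
  rcases Nat.eq_zero_or_pos a with rfl | ha' <;> rcases Nat.eq_zero_or_pos c with rfl | hc'
  · omega
  · have : c * d ≤ 2 := by nlinarith
    have : c ≤ 1 := by nlinarith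
    have : d ≤ 2 := by nlinarith
    interval_cases c; interval_cases d <;> omega
  · have : a * b ≤ 2 := by nlinarith
    have : a ≤ 1 := by nlinarith
    have : b ≤ 2 := by nlinarith
    interval_cases a; interval_cases b <;> omega
  · have : a * b + c * d ≤ 2 := by nlinarith
    have : a = 1 := by nlinarith
    have : c = 1 := by nlinarith
    subst_vars
    omega

/-- All that the counting uses of a factorisation `V ≃ X × Y` into two nontrivial factors:
every edge joins two vertices in a common row or column of the grid. -/
structure RookGrid {V : Type u} (Adj : V → V → Prop) where
  X : Type u
  Y : Type u
  e : V ≃ X × Y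
  one_lt_card_X : 1 < Nat.card X
  one_lt_card_Y : 1 < Nat.card Y
  collinear_of_adj : ∀ u v, Adj u v → (e v).1 = (e u).1 ∨ (e v).2 = (e u).2

theorem nonempty_rookGrid_of_not_isPrimeDigraph {V : Type u} [Finite V] {Adj : V → V → Prop}
    (hV : ∃ x y : V, x ≠ y) (h : ¬ IsPrimeDigraph Adj) : Nonempty (RookGrid Adj) := by
  obtain ⟨X, Y, A, B, e, ⟨x₁, x₂, hx⟩, ⟨y₁, y₂, hy⟩, hadj⟩ := not_not.mp (not_and.mp h hV)
  have : Finite (X × Y) := Finite.of_equiv V e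
  have : Nonempty X := ⟨x₁⟩
  have : Nonempty Y := ⟨y₁⟩
  have : Finite X := Finite.prod_left Y
  have : Finite Y := Finite.prod_right X
  refine ⟨⟨X, Y, e, Finite.one_lt_card_iff_nontrivial.mpr ⟨x₁, x₂, hx⟩,
    Finite.one_lt_card_iff_nontrivial.mpr ⟨y₁, y₂, hy⟩, fun u v huv => ?_⟩⟩
  rcases (hadj u v).mp huv with ⟨h, -⟩ | ⟨h, -⟩
  exacts [Or.inl h.symm, Or.inr h.symm]

theorem RookGrid.nonempty {V : Type u} {Adj : V → V → Prop} (D : RookGrid Adj) :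
    Nonempty V := by
  have := (Nat.card_pos_iff.mp (by linarith [D.one_lt_card_X] : 0 < Nat.card D.X)).1
  have := (Nat.card_pos_iff.mp (by linarith [D.one_lt_card_Y] : 0 < Nat.card D.Y)).1
  exact ⟨D.e.symm (Classical.arbitrary _, Classical.arbitrary _)⟩

namespace RookGrid

variable {V : Type u} {Adj Adj' : V → V → Prop} (D : RookGrid Adj) (D' : RookGrid Adj')

def row (u : V) : Set V := {v | (D.e v).1 = (D.e u).1}

def col (u : V) : Set V := {v | (D.e v).2 = (D.e u).2}

def lines (u : V) : Set V := (D.row u ∪ D.col u) \ {u}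

def offLines (u : V) : Set V := (D.row u ∪ D.col u)ᶜ

def IsFull : Prop := ∀ u v, v ∈ D.lines u → Adj u v

def swap : RookGrid Adj where
  X := D.Y
  Y := D.X
  e := D.e.trans (Equiv.prodComm _ _)
  one_lt_card_X := D.one_lt_card_Y
  one_lt_card_Y := D.one_lt_card_X
  collinear_of_adj u v h := (D.collinear_of_adj u v h).symm

@[simp] theorem swap_lines : D.swap.lines = D.lines := funext fun u =>
  show (D.col u ∪ D.row u) \ {u} = _ by rw [Set.union_comm]; rfl

@[simp] theorem swap_offLines : D.swap.offLines = D.offLines := funext fun u =>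
  show (D.col u ∪ D.row u)ᶜ = _ by rw [Set.union_comm]; rfl

theorem finite_X : Finite D.X :=
  Nat.finite_of_card_ne_zero (by linarith [D.one_lt_card_X])

variable {D}

theorem mem_row_self (u : V) : u ∈ D.row u := rfl

theorem mem_col_self (u : V) : u ∈ D.col u := rfl

theorem mem_row_comm {u v : V} : v ∈ D.row u ↔ u ∈ D.row v := eq_comm

theorem mem_col_comm {u v : V} : v ∈ D.col u ↔ u ∈ D.col v := eq_comm

theorem row_inter_col (u : V) : D.row u ∩ D.col u = {u} := by
  ext v
  simp only [row, col, Set.mem_inter_iff, Set.mem_ofPred_eq, Set.mem_singleton_iff]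
  rw [← Prod.ext_iff, D.e.apply_eq_iff_eq]

theorem eq_of_mem_row_of_mem_col {u v : V} (hr : v ∈ D.row u) (hc : v ∈ D.col u) : v = u := by
  rw [← Set.mem_singleton_iff, ← row_inter_col]; exact ⟨hr, hc⟩

theorem mem_lines_comm {u v : V} : v ∈ D.lines u ↔ u ∈ D.lines v := by
  simp only [lines, Set.mem_sdiff, Set.mem_union, Set.mem_singleton_iff, mem_row_comm (u := u),
    mem_col_comm (u := u), ne_comm (a := v)]

theorem mem_offLines_comm {u v : V} : v ∈ D.offLines u ↔ u ∈ D.offLines v := by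
  simp only [offLines, Set.mem_compl_iff, Set.mem_union, mem_row_comm (u := u),
    mem_col_comm (u := u)]

theorem mem_lines_or_mem_offLines {u v : V} (h : v ≠ u) : v ∈ D.lines u ∨ v ∈ D.offLines u := by
  by_cases hv : v ∈ D.row u ∪ D.col u
  · exact Or.inl ⟨hv, h⟩
  · exact Or.inr hv

theorem ne_of_mem_offLines {u v : V} (h : v ∈ D.offLines u) : v ≠ u :=
  fun hvu => h (by rw [hvu]; exact Or.inl (mem_row_self u))

theorem not_mem_offLines_of_mem_lines {u v : V} (h : v ∈ D.lines u) : v ∉ D.offLines u :=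
  fun h' => h' h.1

theorem mem_lines_of_adj {u v : V} (h : Adj u v) (hne : v ≠ u) : v ∈ D.lines u :=
  ⟨D.collinear_of_adj u v h, hne⟩

theorem not_adj_of_mem_offLines {u v : V} (h : v ∈ D.offLines u) : ¬ Adj u v :=
  fun hadj => h (D.collinear_of_adj u v hadj)

variable (D)

theorem offLines_subset_lines (h : ∀ u v, ¬ Adj u v → Adj' u v) (u : V) :
    D.offLines u ⊆ D'.lines u := fun v hv =>
  D'.mem_lines_of_adj (h u v (not_adj_of_mem_offLines hv)) (ne_of_mem_offLines hv)

theorem mem_row_of_mem_lines (hX : Nat.card D.X = 2) {q r s : V} (hr : r ∈ D.lines q)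
    (hs : s ∈ D.lines q) (hrs : s ∈ D.lines r) : r ∈ D.row q := by
  by_contra hrq
  have hrc : r ∈ D.col q := hr.1.resolve_left hrq
  by_cases hsq : s ∈ D.row q
  · rcases hrs.1 with hsr | hsr
    · exact hrq (hsr.symm.trans hsq)
    · exact hs.2 (eq_of_mem_row_of_mem_col hsq (hsr.trans hrc))
  · have hsr : s ∈ D.row r := eq_of_ne_of_ne_of_natCard_eq_two hX hsq hrq
    exact hrs.2 (eq_of_mem_row_of_mem_col hsr ((hs.1.resolve_left hsq).trans hrc.symm))

theorem natCard_eq : Nat.card V = Nat.card D.X * Nat.card D.Y := by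
  rw [Nat.card_congr D.e, Nat.card_prod]

theorem ncard_row (u : V) : (D.row u).ncard = Nat.card D.Y := by
  rw [← Nat.card_coe_set_eq]
  exact Nat.card_congr
    { toFun := fun v => (D.e v).2
      invFun := fun y => ⟨D.e.symm ((D.e u).1, y), by simp [row]⟩
      left_inv := fun ⟨v, hv⟩ => by
        ext; simp only [row, Set.mem_ofPred_eq] at hv; simp [← hv]
      right_inv := fun y => by simp }

theorem ncard_col (u : V) : (D.col u).ncard = Nat.card D.X :=
  D.swap.ncard_row u

variable [Finite V]

theorem ncard_row_union_col (u : V) :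
    (D.row u ∪ D.col u).ncard + 1 = Nat.card D.X + Nat.card D.Y := by
  rw [← Set.ncard_singleton u, ← row_inter_col u, Set.ncard_union_add_ncard_inter,
    ncard_row, ncard_col, add_comm]

theorem ncard_lines (u : V) :
    (D.lines u).ncard = (Nat.card D.X - 1) + (Nat.card D.Y - 1) := by
  have := D.ncard_row_union_col u
  have := D.one_lt_card_X
  have := D.one_lt_card_Y
  rw [lines, Set.ncard_sdiff_singleton_of_mem (Set.mem_union_left _ (mem_row_self u))]
  omega

theorem ncard_offLines (u : V) :
    (D.offLines u).ncard = (Nat.card D.X - 1) * (Nat.card D.Y - 1) := by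
  have h := Set.ncard_add_ncard_compl (D.row u ∪ D.col u)
  have := D.ncard_row_union_col u
  rw [D.natCard_eq] at h
  obtain ⟨a, ha⟩ := Nat.exists_eq_add_of_lt D.one_lt_card_X
  obtain ⟨b, hb⟩ := Nat.exists_eq_add_of_lt D.one_lt_card_Y
  rw [offLines, ha, hb]
  rw [ha, hb] at h this
  simp only [Nat.add_sub_cancel]
  nlinarith

theorem card_offLines_le_card_lines (h : ∀ u v, ¬ Adj u v → Adj' u v) :
    (Nat.card D.X - 1) * (Nat.card D.Y - 1) ≤ (Nat.card D'.X - 1) + (Nat.card D'.Y - 1) := by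
  obtain ⟨u⟩ := D.nonempty
  rw [← D.ncard_offLines u, ← D'.ncard_lines u]
  exact Set.ncard_le_ncard (offLines_subset_lines D D' h u)

theorem lines_eq_offLines (h : ∀ u v, ¬ Adj u v → Adj' u v)
    (hle : (Nat.card D'.X - 1) + (Nat.card D'.Y - 1) ≤ (Nat.card D.X - 1) * (Nat.card D.Y - 1))
    (u : V) : D'.lines u = D.offLines u :=
  (Set.eq_of_subset_of_ncard_le (offLines_subset_lines D D' h u)
    (by rwa [ncard_lines, ncard_offLines])).symm

theorem natCard_Y_le_natCard_X (h : ∀ u v, ¬ Adj u v → Adj' u v)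
    (hle : (Nat.card D'.X - 1) + (Nat.card D'.Y - 1) ≤ (Nat.card D.X - 1) * (Nat.card D.Y - 1)) :
    Nat.card D'.Y ≤ Nat.card D.X := by
  obtain ⟨u⟩ := D.nonempty
  have := D.finite_X
  rw [← D'.ncard_row u, ← Set.ncard_univ]
  refine Set.ncard_le_ncard_of_injOn (fun v => (D.e v).1) (fun _ _ => trivial) ?_
  intro v hv w hw hvw
  by_contra hne
  have : w ∈ D'.lines v := ⟨Or.inl (hw.trans hv.symm), Ne.symm hne⟩
  rw [lines_eq_offLines D D' h hle] at this
  exact this (Or.inl hvw.symm)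

theorem adj_comm_of_card_le (h : ∀ u v, ¬ Adj' u v → Adj u v)
    (hle : (Nat.card D.X - 1) + (Nat.card D.Y - 1) ≤ (Nat.card D'.X - 1) * (Nat.card D'.Y - 1))
    {u v : V} (huv : Adj u v) : Adj v u := by
  by_cases hvu : v = u
  · rwa [hvu] at huv ⊢
  have hv : v ∈ D'.offLines u := by
    rw [← lines_eq_offLines D' D h hle]
    exact mem_lines_of_adj huv hvu
  exact h v u (not_adj_of_mem_offLines (mem_offLines_comm.mp hv))

theorem natCard_Y_le_four (h : ∀ u v, ¬ Adj u v → Adj' u v) (hX : Nat.card D.X = 2)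
    (hX' : Nat.card D'.X = 2) (hY : Nat.card D.Y = Nat.card D'.Y) : Nat.card D.Y ≤ 4 := by
  set m := Nat.card D.Y
  -- All but at most one off-line vertex of `u` lies on the row of `u` in `D'`; for `u` and
  -- for one such `v` these sets are disjoint, since `D` has only two rows.
  have key : ∀ u, m - 2 ≤ (D.offLines u ∩ D'.row u).ncard := fun u => by
    have hsub : D.offLines u ⊆ (D.offLines u ∩ D'.row u) ∪ (D'.col u \ {u}) := fun v hv => by
      rcases (offLines_subset_lines D D' h u hv) with ⟨hv' | hv', hvu⟩
      exacts [Or.inl ⟨hv, hv'⟩, Or.inr ⟨hv', hvu⟩]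
    have := (Set.ncard_le_ncard hsub).trans (Set.ncard_union_le _ _)
    rw [D.ncard_offLines, Set.ncard_sdiff_singleton_of_mem (mem_col_self u), D'.ncard_col,
      hX, hX'] at this
    omega
  by_contra! hm4
  obtain ⟨u⟩ := D.nonempty
  obtain ⟨v, hvu, hv⟩ := Set.nonempty_of_ncard_ne_zero (by have := key u; omega :
    (D.offLines u ∩ D'.row u).ncard ≠ 0)
  have hrow : D'.row v = D'.row u := Set.ext fun w => by
    simp only [row, Set.mem_ofPred_eq]; rw [hv]
  have hdisj : Disjoint (D.offLines u ∩ D'.row u) (D.offLines v ∩ D'.row u) :=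
    Set.disjoint_left.mpr fun w hwu hwv =>
      hwv.1 (Or.inl (eq_of_ne_of_ne_of_natCard_eq_two hX (fun h => hwu.1 (Or.inl h))
        (fun h => hvu (Or.inl h))))
  have := Set.ncard_le_ncard (Set.union_subset (s := D.offLines u ∩ D'.row u)
    (t := D.offLines v ∩ D'.row u) Set.inter_subset_right Set.inter_subset_right)
  rw [Set.ncard_union_eq hdisj, D'.ncard_row, ← hY] at this
  have := key v
  rw [hrow] at this
  have := key u
  omega

theorem isFull_or_isFull_of_regular (hc : ∀ u v, Adj' u v ↔ ¬ Adj u v)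
    (hcard : (Nat.card D.X - 1) + (Nat.card D.Y - 1) =
      (Nat.card D'.X - 1) * (Nat.card D'.Y - 1) + 1)
    {k : ℕ} (hreg : ∀ u, {v | v ≠ u ∧ Adj u v}.ncard = k) : D.IsFull ∨ D'.IsFull := by
  have hsub : ∀ u, {v | v ≠ u ∧ Adj u v} ⊆ D.lines u := fun u v hv => mem_lines_of_adj hv.2 hv.1
  have hsup : ∀ u, D'.offLines u ⊆ {v | v ≠ u ∧ Adj u v} := fun u v hv =>
    ⟨ne_of_mem_offLines hv, not_not.mp ((hc u v).not.mp (not_adj_of_mem_offLines hv))⟩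
  by_cases hk : k = (Nat.card D.X - 1) + (Nat.card D.Y - 1)
  · refine Or.inl fun u v hv => ?_
    rw [← Set.eq_of_subset_of_ncard_le (hsub u) (by rw [ncard_lines, hreg, hk])] at hv
    exact hv.2
  · refine Or.inr fun u v hv => (hc u v).mpr fun huv => ?_
    have hle : k ≤ (Nat.card D.X - 1) + (Nat.card D.Y - 1) := by
      rw [← hreg u, ← ncard_lines D u]; exact Set.ncard_le_ncard (hsub u)
    have := Set.eq_of_subset_of_ncard_le (hsup u) (by rw [hreg, ncard_offLines]; omega)
    exact not_mem_offLines_of_mem_lines hv (this ▸ ⟨hv.2, huv⟩)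

theorem natCard_Y_eq_two_of_forall_mem_lines (hX : Nat.card D.X = 2) {P : Set V}
    (hP : ∀ u ∈ P, ∀ w ∉ P, w ∈ D.lines u) {u w : V} (hu : u ∈ P) (hw : w ∉ P) :
    Nat.card D.Y = 2 ∧ P ⊆ insert u (D.offLines u) := by
  have hlines : ∀ v, (D.lines v).ncard = Nat.card D.Y := fun v => by
    rw [ncard_lines, hX]; have := D.one_lt_card_Y; omega
  have hsum := Set.ncard_add_ncard_compl P
  rw [D.natCard_eq, hX] at hsum
  have hP_le : P.ncard ≤ Nat.card D.Y := hlines w ▸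
    Set.ncard_le_ncard fun v hv => mem_lines_comm.mp (hP v hv w hw)
  have hPc_le : Pᶜ.ncard ≤ Nat.card D.Y := hlines u ▸ Set.ncard_le_ncard fun v hv => hP u hu v hv
  have hsub : ∀ u' ∈ P, P ⊆ insert u' (D.offLines u') := fun u' hu' v hv => by
    have hPc : Pᶜ = D.lines u' :=
      Set.eq_of_subset_of_ncard_le (fun v hv => hP u' hu' v hv) (by rw [hlines]; omega)
    by_cases hvu : v = u'
    · exact Or.inl hvu
    · exact Or.inr ((mem_lines_or_mem_offLines hvu).resolve_left fun h => (hPc ▸ h) hv)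
  refine ⟨le_antisymm ?_ (by have := D.one_lt_card_Y; omega), hsub u hu⟩
  obtain ⟨u', hu', hu'u⟩ :=
    Set.exists_ne_of_one_lt_ncard (s := P) (by have := D.one_lt_card_Y; omega) u
  have hoff : u' ∈ D.offLines u := (hsub u hu hu').resolve_left hu'u
  have hpair : P ⊆ {u, u'} := fun v hv => by
    by_contra hv'
    simp only [Set.mem_insert_iff, Set.mem_singleton_iff, not_or] at hv'
    have h1 := (hsub u hu hv).resolve_left hv'.1
    have h2 := (hsub u' hu' hv).resolve_left hv'.2
    exact h2 (Or.inl (eq_of_ne_of_ne_of_natCard_eq_two hX (fun h => h1 (Or.inl h))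
      (fun h => hoff (Or.inl h))))
  calc Nat.card D.Y = P.ncard := by omega
    _ ≤ ({u, u'} : Set V).ncard := Set.ncard_le_ncard hpair
    _ = 2 := Set.ncard_pair (Ne.symm hu'u)

theorem natCard_eq_two_of_forall_mem_lines {P : Set V}
    (hP : ∀ u ∈ P, ∀ w ∉ P, w ∈ D.lines u) {u w : V} (hu : u ∈ P) (hw : w ∉ P) :
    Nat.card D.X = 2 ∧ Nat.card D.Y = 2 ∧ P ⊆ insert u (D.offLines u) := by
  have hlen : Nat.card D.X * Nat.card D.Y ≤ 2 * ((Nat.card D.X - 1) + (Nat.card D.Y - 1)) := by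
    rw [← D.natCard_eq, ← Set.ncard_add_ncard_compl P, two_mul]
    refine add_le_add ?_ ?_
    · rw [← ncard_lines D w]
      exact Set.ncard_le_ncard fun v hv => mem_lines_comm.mp (hP v hv w hw)
    · rw [← ncard_lines D u]
      exact Set.ncard_le_ncard fun v hv => hP u hu v hv
  rcases eq_two_or_eq_two_of_mul_le D.one_lt_card_X D.one_lt_card_Y hlen with hX | hY
  · exact ⟨hX, D.natCard_Y_eq_two_of_forall_mem_lines hX hP hu hw⟩
  · have := D.swap.natCard_Y_eq_two_of_forall_mem_lines hY (by simpa using hP) hu hw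
    simp only [swap_offLines] at this
    exact ⟨this.1, hY, this.2⟩

end RookGrid

section CayleyGrids

variable {G : Type u} [Group G] {T : Set G}

theorem mapsTo_of_subset_pair {S : Set G} {t : G} {φ : MulAut G} (hS : S ⊆ {1, t})
    (hφ : φ t = t) : Set.MapsTo φ S S := fun x hx => by
  rcases hS hx with rfl | rfl
  · rwa [map_one]
  · rwa [hφ]

theorem mapsTo_of_mapsTo_diff_one {S : Set G} {φ : MulAut G}
    (h : Set.MapsTo φ (S \ {1}) (S \ {1})) : Set.MapsTo φ S S := fun x hx => by
  rcases eq_or_ne x 1 with rfl | hx1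
  · rwa [map_one]
  · exact (h ⟨hx, hx1⟩).1

theorem RookGrid.diff_one_eq_lines {D : RookGrid (cayAdj T)} (hD : D.IsFull) :
    T \ {1} = D.lines 1 := by
  ext v
  exact ⟨fun hv => D.mem_lines_of_adj (cayAdj_one_left.mpr hv.1) hv.2,
    fun hv => ⟨cayAdj_one_left.mp (hD 1 v hv), hv.2⟩⟩

variable [Finite G]

theorem inv_mem_of_mul_mem {S : Set G} (h1 : (1 : G) ∈ S) (hmul : ∀ a ∈ S, ∀ b ∈ S, a * b ∈ S)
    {x : G} (hx : x ∈ S) : x⁻¹ ∈ S := by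
  let M : Submonoid G := ⟨⟨S, fun ha hb => hmul _ ha _ hb⟩, h1⟩
  exact Submonoid.powers_le.mpr (show x ∈ M from hx)
    (mem_powers_iff_mem_zpowers.mpr (Subgroup.inv_mem _ (Subgroup.mem_zpowers x)))

theorem RookGrid.mul_mem_row_one {D : RookGrid (cayAdj T)} (hD : D.IsFull)
    (hX : Nat.card D.X = 2) (hY : 3 ≤ Nat.card D.Y) {a v : G} (ha : a ∈ D.row 1)
    (hv : v ∈ D.row 1) : v * a ∈ D.row 1 := by
  rcases eq_or_ne v 1 with rfl | hv1
  · rwa [one_mul]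
  -- Right translation by `a` maps the triangle `1, v, w` in the row of `1` to a triangle
  -- through `a`; as columns have only two vertices, every triangle of the rook's graph lies
  -- in a row.
  obtain ⟨w, ⟨hw, hw'⟩⟩ : (D.row 1 \ {1, v}).Nonempty := Set.nonempty_of_ncard_ne_zero (by
    rw [Set.ncard_sdiff (by simp [Set.insert_subset_iff, mem_row_self, hv]),
      Set.ncard_pair hv1.symm, D.ncard_row]
    omega)
  simp only [Set.mem_insert_iff, Set.mem_singleton_iff, not_or] at hw'
  have hlines : ∀ {x y : G}, x ∈ D.row 1 → y ∈ D.row 1 → y ≠ x → y * a ∈ D.lines (x * a) :=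
    fun hx hy hyx => D.mem_lines_of_adj
      ((cayAdj_mul_right _ _ a).mpr (hD _ _ ⟨Or.inl (hy.trans hx.symm), hyx⟩))
      (fun h => hyx (mul_right_cancel h))
  have := D.mem_row_of_mem_lines hX (q := 1 * a) (hlines (mem_row_self 1) hv hv1)
    (hlines (mem_row_self 1) hw hw'.1) (hlines hv hw hw'.2)
  rw [one_mul] at this
  exact this.trans ha

def RookGrid.rowSubgroup {D : RookGrid (cayAdj T)} (hD : D.IsFull) (hX : Nat.card D.X = 2)
    (hY : 3 ≤ Nat.card D.Y) : Subgroup G where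
  carrier := D.row 1
  mul_mem' ha hb := D.mul_mem_row_one hD hX hY hb ha
  one_mem' := RookGrid.mem_row_self 1
  inv_mem' := inv_mem_of_mul_mem (RookGrid.mem_row_self 1)
    fun _ ha _ hb => D.mul_mem_row_one hD hX hY hb ha

theorem not_autGSTrivial_of_isFull_of_card_Y_eq_two {D : RookGrid (cayAdj T)} (hD : D.IsFull)
    (hX : Nat.card D.X = 2) (hY : Nat.card D.Y = 2) : ¬ AutGSTrivial T := by
  intro hA
  obtain ⟨t, ht⟩ : ∃ t, D.offLines 1 = {t} :=
    Set.ncard_eq_one.mp (by rw [D.ncard_offLines, hX, hY])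
  have htoff : t ∈ D.offLines 1 := ht ▸ rfl
  have hTc : Tᶜ ⊆ {1, t} := fun x hx => by
    rcases eq_or_ne x 1 with rfl | hx1
    · exact Or.inl rfl
    rcases D.mem_lines_or_mem_offLines hx1 with h | h
    · exact absurd (cayAdj_one_left.mp (hD 1 x h)) hx
    · exact Or.inr (ht ▸ h)
  have ht1 : t ≠ 1 := D.ne_of_mem_offLines htoff
  have htt : t * t = 1 := by
    have hti : t⁻¹ ∈ Tᶜ := fun h =>
      D.not_adj_of_mem_offLines (RookGrid.mem_offLines_comm.mp htoff) (cayAdj_one_right.mpr h)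
    rcases hTc hti with h | h
    · exact absurd (inv_eq_one.mp h) ht1
    · rw [Set.mem_singleton_iff] at h; nth_rw 2 [← h]; exact mul_inv_cancel t
  obtain ⟨φ, hφ, hφt⟩ :=
    exists_mulAut_ne_one_fixing_of_card_eq_four (by rw [D.natCard_eq, hX, hY]) ht1 htt
  exact hφ (hA.compl.eq_one_of_mapsTo (mapsTo_of_subset_pair hTc hφt))

theorem not_autGSTrivial_of_isFull_of_card_Y_eq_three_or_four {D : RookGrid (cayAdj T)}
    (hD : D.IsFull) (hX : Nat.card D.X = 2) (hY : Nat.card D.Y = 3 ∨ Nat.card D.Y = 4) :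
    ¬ AutGSTrivial T := by
  intro hA
  set R := D.rowSubgroup hD hX (by omega)
  have hRcard : Nat.card R = Nat.card D.Y := (Nat.card_coe_set_eq (D.row 1)).trans (D.ncard_row 1)
  have hR : R.index = 2 := by
    have := R.index_mul_card
    rw [hRcard, D.natCard_eq, hX] at this
    exact Nat.eq_of_mul_eq_mul_right (by omega) this
  obtain ⟨t, ht⟩ : ∃ t, D.col 1 \ {1} = {t} := Set.ncard_eq_one.mp (by
    rw [Set.ncard_sdiff_singleton_of_mem (RookGrid.mem_col_self 1), D.ncard_col, hX])
  have htcol : t ∈ D.col 1 \ {1} := ht ▸ rfl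
  have htR : t ∉ R := fun h => htcol.2 (D.eq_of_mem_row_of_mem_col h htcol.1)
  have hT : T \ {1} = ((R : Set G) \ {1}) ∪ {t} := by
    rw [RookGrid.diff_one_eq_lines hD, RookGrid.lines, Set.union_sdiff_distrib, ht]; rfl
  have htt : t * t = 1 := by
    have htl : (1 : G) ∈ D.lines t := RookGrid.mem_lines_comm.mp ⟨Or.inr htcol.1, htcol.2⟩
    have hti : t⁻¹ ∈ T \ {1} := ⟨cayAdj_one_right.mp (hD t 1 htl), by simpa using htcol.2⟩
    rw [hT] at hti
    rcases hti with h | h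
    · exact absurd (by simpa using R.inv_mem h.1) htR
    · rw [Set.mem_singleton_iff] at h; nth_rw 2 [← h]; exact mul_inv_cancel t
  obtain ⟨φ, hφ, hφR, hφt⟩ := exists_mulAut_ne_one_of_index_eq_two hR (hRcard ▸ hY) htR htt
  refine hφ (hA.eq_one_of_mapsTo (mapsTo_of_mapsTo_diff_one ?_))
  rw [hT]
  rintro x (⟨hxR, hx1⟩ | rfl)
  · exact Or.inl ⟨hφR x hxR, by simpa using hx1⟩
  · exact Or.inr hφt

theorem not_autGSTrivial_of_isFull {D : RookGrid (cayAdj T)} (hD : D.IsFull)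
    (hX : Nat.card D.X = 2) (hY : Nat.card D.Y ≤ 4) : ¬ AutGSTrivial T := by
  have := D.one_lt_card_Y
  by_cases hY2 : Nat.card D.Y = 2
  · exact not_autGSTrivial_of_isFull_of_card_Y_eq_two hD hX hY2
  · exact not_autGSTrivial_of_isFull_of_card_Y_eq_three_or_four hD hX (by omega)

theorem not_autGSTrivial_of_not_weaklyConnected (h : ¬ WeaklyConnected (cayAdj T))
    (D : RookGrid (cayAdj Tᶜ)) : ¬ AutGSTrivial T := by
  intro hA
  obtain ⟨P, h1P, ⟨w, hw⟩, hP⟩ := exists_closed_of_not_weaklyConnected h 1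
  have hcross : ∀ u ∈ P, ∀ w ∉ P, w ∈ D.lines u := fun u hu w hw =>
    D.mem_lines_of_adj ((cayAdj_compl T u w).mpr fun h => hw ((hP u w h).mp hu))
      (fun h => hw (h ▸ hu))
  obtain ⟨hX, hY, hsub⟩ := D.natCard_eq_two_of_forall_mem_lines hcross h1P hw
  obtain ⟨t, ht⟩ : ∃ t, D.offLines 1 = {t} :=
    Set.ncard_eq_one.mp (by rw [D.ncard_offLines, hX, hY])
  have htoff : t ∈ D.offLines 1 := ht ▸ rfl
  have hTP : T ⊆ P := fun s hs => (hP 1 s (cayAdj_one_left.mpr hs)).mp h1P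
  have htT : t ∈ T := cayAdj_one_left.mp
    (not_not.mp ((cayAdj_compl T 1 t).not.mp (D.not_adj_of_mem_offLines htoff)))
  have hP1t : P ⊆ {1, t} := ht ▸ hsub
  have htt : t * t = 1 := by
    rcases hP1t ((hP t (t * t) ⟨t, htT, rfl⟩).mp (hTP htT)) with h | h
    · exact h
    · exact absurd (by simpa using h) (D.ne_of_mem_offLines htoff)
  obtain ⟨φ, hφ, hφt⟩ := exists_mulAut_ne_one_fixing_of_card_eq_four
    (by rw [D.natCard_eq, hX, hY]) (D.ne_of_mem_offLines htoff) htt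
  exact hφ (hA.eq_one_of_mapsTo (mapsTo_of_subset_pair (hTP.trans hP1t) hφt))

theorem not_autGSTrivial_of_rookGrid_of_le {D : RookGrid (cayAdj T)}
    {D' : RookGrid (cayAdj Tᶜ)} (hD : Nat.card D.X ≤ Nat.card D.Y)
    (hD' : Nat.card D'.X ≤ Nat.card D'.Y) : ¬ AutGSTrivial T := by
  intro hA
  have hc := cayAdj_compl T
  have h₁ : ∀ u v, ¬ cayAdj T u v → cayAdj Tᶜ u v := fun u v => (hc u v).mpr
  have h₂ : ∀ u v, ¬ cayAdj Tᶜ u v → cayAdj T u v := fun u v h =>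
    not_not.mp ((hc u v).not.mp h)
  rcases grid_dims D.one_lt_card_X hD D'.one_lt_card_X hD'
      (by rw [← D.natCard_eq, D'.natCard_eq]) (D.card_offLines_le_card_lines D' h₁)
      (D'.card_offLines_le_card_lines D h₂) with
    ⟨hX, hX', hY⟩ | ⟨hX, hY, hX', hY'⟩ | ⟨hX, hY, hX', hY'⟩ | ⟨hX, hY, hX', hY'⟩
  · have hY4 := D.natCard_Y_le_four D' h₁ hX hX' hY
    have := D.one_lt_card_Y
    rcases D.isFull_or_isFull_of_regular D' hc (by rw [hX, hX', ← hY]; omega)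
      (ncard_setOf_cayAdj T) with hF | hF
    · exact not_autGSTrivial_of_isFull hF hX hY4 hA
    · exact not_autGSTrivial_of_isFull hF hX' (hY ▸ hY4) hA.compl
  · obtain ⟨φ, hφ, hinv⟩ := exists_mulAut_ne_one_inv_of_card_eq_nine (G := G)
      (by rw [D.natCard_eq, hX, hY])
    refine hφ (hA.eq_one_of_mapsTo fun s hs => ?_)
    rw [hinv, ← cayAdj_one_right]
    exact D.adj_comm_of_card_le D' h₂ (by rw [hX, hY, hX', hY']) (cayAdj_one_left.mpr hs)
  · have := D.natCard_Y_le_natCard_X D' h₁ (by rw [hX, hY, hX', hY'])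
    omega
  · have := D'.natCard_Y_le_natCard_X D h₂ (by rw [hX, hY, hX', hY'])
    omega

theorem not_autGSTrivial_of_rookGrid (D : RookGrid (cayAdj T)) (D' : RookGrid (cayAdj Tᶜ)) :
    ¬ AutGSTrivial T := by
  rcases le_total (Nat.card D.X) (Nat.card D.Y) with h | h <;>
    rcases le_total (Nat.card D'.X) (Nat.card D'.Y) with h' | h'
  · exact not_autGSTrivial_of_rookGrid_of_le (D := D) (D' := D') h h'
  · exact not_autGSTrivial_of_rookGrid_of_le (D := D) (D' := D'.swap) h h'
  · exact not_autGSTrivial_of_rookGrid_of_le (D := D.swap) (D' := D') h h'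
  · exact not_autGSTrivial_of_rookGrid_of_le (D := D.swap) (D' := D'.swap) h h'

theorem weaklyConnected_and_isPrimeDigraph_or_compl [Nontrivial G] {S : Set G}
    (hA : AutGSTrivial S) :
    (WeaklyConnected (cayAdj S) ∧ IsPrimeDigraph (cayAdj S)) ∨
      (WeaklyConnected (cayAdj Sᶜ) ∧ IsPrimeDigraph (cayAdj Sᶜ)) := by
  have hV : ∃ x y : G, x ≠ y := exists_pair_ne G
  by_contra! h
  by_cases h₁ : WeaklyConnected (cayAdj S) <;> by_cases h₂ : WeaklyConnected (cayAdj Sᶜ)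
  · obtain ⟨D⟩ := nonempty_rookGrid_of_not_isPrimeDigraph hV (h.1 h₁)
    obtain ⟨D'⟩ := nonempty_rookGrid_of_not_isPrimeDigraph hV (h.2 h₂)
    exact not_autGSTrivial_of_rookGrid D D' hA
  · obtain ⟨D⟩ := nonempty_rookGrid_of_not_isPrimeDigraph hV (h.1 h₁)
    rw [← compl_compl S] at D
    exact not_autGSTrivial_of_not_weaklyConnected h₂ D hA.compl
  · obtain ⟨D'⟩ := nonempty_rookGrid_of_not_isPrimeDigraph hV (h.2 h₂)
    exact not_autGSTrivial_of_not_weaklyConnected h₁ D' hA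
  · exact h₂ (weaklyConnected_of_not_weaklyConnected (cayAdj_compl S) h₁)

end CayleyGrids

/-- If a finite group `G` is not DRR-detecting, then some Cayley
digraph witnessing this is weakly connected and prime with respect to the cartesian
product; likewise for GRR-detecting with a Cayley graph witness. -/
theorem exists_prime_connected_witness {G : Type*} [Group G] [Fintype G] :
    (¬ DRRDetecting G →
      ∃ S : Set G, (AutGSTrivial S ∧ ¬ IsDRR G (cayAdj S)) ∧
        WeaklyConnected (cayAdj S) ∧ IsPrimeDigraph (cayAdj S)) ∧
    (¬ GRRDetecting G →
      ∃ S : Set G, (∀ s ∈ S, s⁻¹ ∈ S) ∧ (AutGSTrivial S ∧ ¬ IsGRR G (cayAdj S)) ∧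
        WeaklyConnected (cayAdj S) ∧ IsPrimeDigraph (cayAdj S)) := by
  refine ⟨fun h => ?_, fun h => ?_⟩
  · obtain ⟨S, hA, hS⟩ : ∃ S : Set G, AutGSTrivial S ∧ ¬ IsDRR G (cayAdj S) := by
      simpa [DRRDetecting] using h
    have := nontrivial_of_not_isDRR hS
    rcases weaklyConnected_and_isPrimeDigraph_or_compl hA with hc | hc
    · exact ⟨S, ⟨hA, hS⟩, hc⟩
    · exact ⟨Sᶜ, ⟨hA.compl, isDRR_cayAdj_compl.not.mpr hS⟩, hc⟩
  · obtain ⟨S, hS_inv, hA, hS⟩ : ∃ S : Set G,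
        (∀ s ∈ S, s⁻¹ ∈ S) ∧ AutGSTrivial S ∧ ¬ IsGRR G (cayAdj S) := by
      simpa [GRRDetecting] using h
    have hS' : ¬ IsDRR G (cayAdj S) := fun h => hS ⟨symmetric_cayAdj hS_inv, h⟩
    have := nontrivial_of_not_isDRR hS'
    have hSc_inv : ∀ s ∈ Sᶜ, s⁻¹ ∈ Sᶜ := fun s hs h => hs (by simpa using hS_inv _ h)
    rcases weaklyConnected_and_isPrimeDigraph_or_compl hA with hc | hc
    · exact ⟨S, hS_inv, ⟨hA, hS⟩, hc⟩
    · exact ⟨Sᶜ, hSc_inv, ⟨hA.compl, fun h => hS' (isDRR_cayAdj_compl.mp h.2)⟩, hc⟩
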